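/- arXiv:1811.12489 — 4 statements merged into one kernel-verified Lean document; each statement's English description precedes it below -/
import Mathlib

section
/- There exists a constant c₁ > 0 such that for all s₁, s₂ ∈ ℝ one has c₁ · |s₁ − s₂|² ≤ |H(s₁) − H(s₂)|. -/
open MeasureTheory

/-- The double-well potential `W(s) = (1 - s²)²`. -/
noncomputable def W (s : ℝ) : ℝ := (1 - s ^ 2) ^ 2

/-- `H(s) = ∫_{-1}^{s} √(min(W(r), 1 + r²)) dr`. -/
noncomputable def H (s : ℝ) : ℝ :=
  ∫ r in (-1 : ℝ)..s, Real.sqrt (min (W r) (1 + r ^ 2))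

/-!
On each half-line the integrand of `H` dominates the distance to the well `±1` it contains,
since `(1 - r²)² = (r - 1)²(r + 1)²`. Integrating `|r - p|` over an interval of length `L` gives
at least `L² / 4`, and an interval meeting both half-lines is split at `0`, which costs a
factor `1 / 2`.
-/

open intervalIntegral

/-- Splitting `[a, b]` at `c` and using `x² + y² ≥ (x + y)² / 2` on the two pieces. -/
lemma half_mul_sq_le_sub_of_split {G : ℝ → ℝ} {k : ℝ} (c : ℝ) (hk : 0 ≤ k)
    (hG : ∀ a b, a ≤ b → b ≤ c ∨ c ≤ a → k * (b - a) ^ 2 ≤ G b - G a)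
    {a b : ℝ} (hab : a ≤ b) : k / 2 * (b - a) ^ 2 ≤ G b - G a := by
  by_cases hc : b ≤ c ∨ c ≤ a
  · nlinarith [hG a b hab hc, sq_nonneg (b - a)]
  · push Not at hc
    have hleft := hG a c hc.2.le (Or.inl le_rfl)
    have hright := hG c b hc.1.le (Or.inr le_rfl)
    nlinarith [sq_nonneg (b + a - 2 * c)]

lemma mul_sq_abs_sub_le_abs_sub {G : ℝ → ℝ} {k : ℝ}
    (hG : ∀ a b, a ≤ b → k * (b - a) ^ 2 ≤ G b - G a) (s t : ℝ) :
    k * |s - t| ^ 2 ≤ |G s - G t| := by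
  rw [sq_abs]
  rcases le_total t s with hts | hst
  · exact (hG t s hts).trans (le_abs_self _)
  · calc k * (s - t) ^ 2 = k * (t - s) ^ 2 := by ring
      _ ≤ G t - G s := hG s t hst
      _ ≤ |G s - G t| := by rw [abs_sub_comm]; exact le_abs_self _

lemma integral_id_sub_const (a b p : ℝ) :
    ∫ r in a..b, (r - p) = ((b - p) ^ 2 - (a - p) ^ 2) / 2 := by
  simp only [integral_sub intervalIntegrable_id intervalIntegrable_const, integral_id,
    intervalIntegral.integral_const, smul_eq_mul]
  ring

lemma half_mul_sq_le_integral_abs_sub {a b p : ℝ} (hab : a ≤ b) (hp : b ≤ p ∨ p ≤ a) :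
    1 / 2 * (b - a) ^ 2 ≤ ∫ r in a..b, |r - p| := by
  refine le_trans ?_ (abs_integral_le_integral_abs hab)
  rw [integral_id_sub_const, le_abs]
  rcases hp with hp | hp
  · right; nlinarith
  · left; nlinarith

lemma quarter_mul_sq_le_integral_abs_sub (p : ℝ) {a b : ℝ} (hab : a ≤ b) :
    1 / 4 * (b - a) ^ 2 ≤ ∫ r in a..b, |r - p| := by
  have hint (x y : ℝ) : IntervalIntegrable (fun r => |r - p|) volume x y :=
    Continuous.intervalIntegrable (by fun_prop) x y
  have hsplit := half_mul_sq_le_sub_of_split (G := fun x => ∫ r in p..x, |r - p|) (k := 1 / 2) p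
    (by norm_num) (fun a b hab hp => by
      rw [integral_interval_sub_left (hint _ _) (hint _ _)]
      exact half_mul_sq_le_integral_abs_sub hab hp) hab
  rw [integral_interval_sub_left (hint _ _) (hint _ _)] at hsplit
  linarith

lemma continuous_sqrt_min_W : Continuous fun r => √(min (W r) (1 + r ^ 2)) := by
  unfold W; fun_prop

lemma H_sub_H (a b : ℝ) : H b - H a = ∫ r in a..b, √(min (W r) (1 + r ^ 2)) :=
  integral_interval_sub_left (continuous_sqrt_min_W.intervalIntegrable _ _)
    (continuous_sqrt_min_W.intervalIntegrable _ _)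

lemma abs_sub_one_le_sqrt_min_W {r : ℝ} (hr : 0 ≤ r) :
    |r - 1| ≤ √(min (W r) (1 + r ^ 2)) := by
  refine Real.le_sqrt_of_sq_le (le_min ?_ ?_) <;> rw [sq_abs]
  · rw [W]; nlinarith [sq_nonneg (r - 1), mul_nonneg hr (sq_nonneg (r - 1))]
  · nlinarith

lemma abs_add_one_le_sqrt_min_W {r : ℝ} (hr : r ≤ 0) :
    |r + 1| ≤ √(min (W r) (1 + r ^ 2)) := by
  refine Real.le_sqrt_of_sq_le (le_min ?_ ?_) <;> rw [sq_abs]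
  · rw [W]; nlinarith [sq_nonneg (r + 1), mul_nonneg (neg_nonneg.2 hr) (sq_nonneg (r + 1))]
  · nlinarith

lemma quarter_mul_sq_le_H_sub_of_sign {a b : ℝ} (hab : a ≤ b) (h0 : b ≤ 0 ∨ 0 ≤ a) :
    1 / 4 * (b - a) ^ 2 ≤ H b - H a := by
  rw [H_sub_H]
  obtain ⟨p, hp⟩ : ∃ p : ℝ, ∀ r ∈ Set.Icc a b, |r - p| ≤ √(min (W r) (1 + r ^ 2)) := by
    rcases h0 with hb | ha
    · exact ⟨-1, fun r hr => by simpa using abs_add_one_le_sqrt_min_W (hr.2.trans hb)⟩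
    · exact ⟨1, fun r hr => abs_sub_one_le_sqrt_min_W (ha.trans hr.1)⟩
  exact (quarter_mul_sq_le_integral_abs_sub p hab).trans
    (integral_mono_on hab (Continuous.intervalIntegrable (by fun_prop) _ _)
      (continuous_sqrt_min_W.intervalIntegrable _ _) hp)

/-- There exists `c₁ > 0` such that `c₁ · |s₁ − s₂|² ≤ |H(s₁) − H(s₂)|`
for all `s₁, s₂ ∈ ℝ` (lower bound in estimate (propH) of the
Modica–Mortola trick). -/
theorem H_lower_bound :
    ∃ c₁ : ℝ, 0 < c₁ ∧ ∀ s₁ s₂ : ℝ, c₁ * |s₁ - s₂| ^ 2 ≤ |H s₁ - H s₂| := by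
  refine ⟨1 / 4 / 2, by norm_num, mul_sq_abs_sub_le_abs_sub fun a b hab => ?_⟩
  exact half_mul_sq_le_sub_of_split (k := 1 / 4) 0 (by norm_num)
    (fun _ _ => quarter_mul_sq_le_H_sub_of_sign) hab
end

section
/- Pointwise Modica–Mortola estimate: let E be a real normed vector space, let ε > 0, and let f : E → ℝ be differentiable at a point x ∈ E. Then the composition H ∘ f is differentiable at x and its Fréchet derivative satisfies ‖D(H ∘ f)(x)‖ ≤ (1/2) · ( ε⁻¹ · W(f(x)) + ε · ‖Df(x)‖² ). -/
open MeasureTheory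

/-- Pointwise Modica–Mortola estimate: if `f : E → ℝ` is differentiable at `x`,
then `H ∘ f` is differentiable at `x` and
`‖D(H ∘ f)(x)‖ ≤ (1/2) · (ε⁻¹ · W(f(x)) + ε · ‖Df(x)‖²)` for every `ε > 0`. -/
theorem pointwise_modica_mortola
    {E : Type*} [NormedAddCommGroup E] [NormedSpace ℝ E]
    (ε : ℝ) (hε : 0 < ε) (f : E → ℝ) (x : E) (hf : DifferentiableAt ℝ f x) :
    DifferentiableAt ℝ (H ∘ f) x ∧
      ‖fderiv ℝ (H ∘ f) x‖ ≤ (1 / 2) * (ε⁻¹ * W (f x) + ε * ‖fderiv ℝ f x‖ ^ 2) := by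
  have hgcont : Continuous fun r : ℝ => Real.sqrt (min (W r) (1 + r ^ 2)) := by
    apply Real.continuous_sqrt.comp
    exact Continuous.min (by unfold W; continuity) (by continuity)
  have hH : ∀ s : ℝ, HasDerivAt H (Real.sqrt (min (W s) (1 + s ^ 2))) s := by
    intro s
    exact intervalIntegral.integral_hasDerivAt_right
      (hgcont.intervalIntegrable _ _) (hgcont.stronglyMeasurableAtFilter _ _)
      hgcont.continuousAt
  have hcomp := (hH (f x)).comp_hasFDerivAt x hf.hasFDerivAt
  have hdiff : DifferentiableAt ℝ (H ∘ f) x := hcomp.differentiableAt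
  refine ⟨hdiff, ?_⟩
  rw [hcomp.fderiv]
  have hW : (0:ℝ) ≤ W (f x) := by unfold W; positivity
  have h1 : ‖Real.sqrt (min (W (f x)) (1 + f x ^ 2)) • fderiv ℝ f x‖
      ≤ Real.sqrt (W (f x)) * ‖fderiv ℝ f x‖ := by
    rw [norm_smul, Real.norm_eq_abs, abs_of_nonneg (Real.sqrt_nonneg _)]
    exact mul_le_mul_of_nonneg_right
      (Real.sqrt_le_sqrt (min_le_left _ _)) (norm_nonneg _)
  refine h1.trans ?_
  set a := Real.sqrt (W (f x)) with ha
  set b := ‖fderiv ℝ f x‖ with hb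
  have ha2 : a ^ 2 = W (f x) := Real.sq_sqrt hW
  have ha0 : 0 ≤ a := Real.sqrt_nonneg _
  have hb0 : 0 ≤ b := norm_nonneg _
  rw [← ha2]
  rw [div_mul_eq_mul_div, le_div_iff₀ (by norm_num : (0:ℝ) < 2)]
  nlinarith [mul_nonneg (sq_nonneg (a - ε * b)) (inv_nonneg.2 hε.le),
    mul_inv_cancel₀ (ne_of_gt hε), sq_nonneg b, hε.le]
end

section
/- Let n ≥ 1 and let ρ : ℝⁿ → [0, 1] be measurable with support contained in the closed unit ball and with ∫_{ℝⁿ} ρ = 1; for η > 0 set ρ_η(x) := η^{−n} ρ(x/η). Then for every measurable square-integrable f : ℝⁿ → ℝ, every η > 0 and every α ∈ (0, 1), one has ∫_{ℝⁿ} |(ρ_η * f)(x) − f(x)|² dx ≤ η^{2α} · ∫_{ℝⁿ} ∫_{ℝⁿ} |f(x − y) − f(x)|² · ‖y‖^{−(n + 2α)} dy dx, where the right-hand side is allowed to be infinite. -/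
open MeasureTheory Module
open scoped Convolution

/-!
Since `∫ ρ_η = 1`, the difference `(ρ_η ⋆ f) x - f x` is the `ρ_η`-average of `f (x - y) - f x`,
so Jensen's inequality for the probability measure `ρ_η dy` bounds its square by the
`ρ_η`-average of `(f (x - y) - f x)²`. As `ρ_η ≤ η⁻ⁿ` vanishes outside the ball of radius `η`,
`ρ_η y ≤ η^{2α} ‖y‖^{-(n + 2α)}` for `y ≠ 0`; integrating in `x` gives the estimate.
-/

section Averages

variable {α : Type*} [MeasurableSpace α]

theorem ofReal_sq_integral_le_lintegral_sq (ν : Measure α) [IsProbabilityMeasure ν] {F : α → ℝ}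
    (hF : AEStronglyMeasurable F ν) :
    ENNReal.ofReal ((∫ x, F x ∂ν) ^ 2) ≤ ∫⁻ x, ENNReal.ofReal (F x ^ 2) ∂ν := by
  calc ENNReal.ofReal ((∫ x, F x ∂ν) ^ 2) = ‖∫ x, F x ∂ν‖ₑ ^ 2 := by
        rw [Real.enorm_eq_ofReal_abs, ← ENNReal.ofReal_pow (abs_nonneg _), sq_abs]
    _ ≤ eLpNorm F 1 ν ^ 2 := by
        rw [eLpNorm_one_eq_lintegral_enorm]
        gcongr
        exact enorm_integral_le_lintegral_enorm F
    _ ≤ eLpNorm F 2 ν ^ 2 := by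
        gcongr
        exact eLpNorm_le_eLpNorm_of_exponent_le one_le_two hF
    _ = ∫⁻ x, ENNReal.ofReal (F x ^ 2) ∂ν := by
        have := eLpNorm_nnreal_pow_eq_lintegral (f := F) (μ := ν) (p := 2) two_ne_zero
        simp only [NNReal.coe_ofNat, ENNReal.coe_ofNat, ENNReal.rpow_two] at this
        rw [this]
        congr 1 with x
        rw [Real.enorm_eq_ofReal_abs, ← ENNReal.ofReal_pow (abs_nonneg _), sq_abs]

theorem ofReal_sq_integral_mul_le_lintegral_mul_sq (μ : Measure α) {g F : α → ℝ}
    (hg_nonneg : 0 ≤ g) (hg : ∫ x, g x ∂μ = 1) (hF : AEStronglyMeasurable F μ) :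
    ENNReal.ofReal ((∫ x, g x * F x ∂μ) ^ 2) ≤ ∫⁻ x, ENNReal.ofReal (g x * F x ^ 2) ∂μ := by
  have hg_int : Integrable g μ := .of_integral_ne_zero (by simp [hg])
  have hdens : AEMeasurable (fun x => ENNReal.ofReal (g x)) μ := hg_int.aemeasurable.ennreal_ofReal
  have hfin : ∀ᵐ x ∂μ, ENNReal.ofReal (g x) < ⊤ := ae_of_all _ fun _ => ENNReal.ofReal_lt_top
  set ν := μ.withDensity fun x => ENNReal.ofReal (g x)
  have : IsProbabilityMeasure ν := ⟨by
    rw [withDensity_apply _ MeasurableSet.univ, Measure.restrict_univ,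
      ← ofReal_integral_eq_lintegral_ofReal hg_int (ae_of_all _ hg_nonneg), hg, ENNReal.ofReal_one]⟩
  have key :=
    ofReal_sq_integral_le_lintegral_sq ν (hF.mono_ac (withDensity_absolutelyContinuous _ _))
  rw [integral_withDensity_eq_integral_toReal_smul₀ hdens hfin,
    lintegral_withDensity_eq_lintegral_mul_non_measurable₀ _ hdens hfin] at key
  simpa [ENNReal.toReal_ofReal (hg_nonneg _), ENNReal.ofReal_mul (hg_nonneg _)] using key

theorem memLp_two_of_integrable_of_le {g : α → ℝ} {μ : Measure α} {C : ℝ} (hg : Integrable g μ)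
    (hg_nonneg : 0 ≤ g) (hg_le : ∀ x, g x ≤ C) : MemLp g 2 μ := by
  refine (memLp_two_iff_integrable_sq hg.aestronglyMeasurable).2 <|
    (hg.const_mul C).mono' (hg.aestronglyMeasurable.pow 2) (ae_of_all _ fun x => ?_)
  rw [Real.norm_eq_abs, abs_of_nonneg (sq_nonneg _), sq]
  exact mul_le_mul_of_nonneg_right (hg_le x) (hg_nonneg x)

end Averages

section Convolution

variable {G : Type*} [AddGroup G] [MeasurableSpace G] {μ : Measure G} {g f : G → ℝ}

theorem convolution_sub_self_eq_integral (hg : ∫ t, g t ∂μ = 1) {x : G}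
    (hgf : Integrable (fun t => g t * f (x - t)) μ) :
    (g ⋆[ContinuousLinearMap.lsmul ℝ ℝ, μ] f) x - f x = ∫ t, g t * (f (x - t) - f x) ∂μ := by
  have hg_int : Integrable g μ := .of_integral_ne_zero (by simp [hg])
  simp_rw [mul_sub]
  rw [integral_sub hgf (hg_int.mul_const _), integral_mul_const, hg, one_mul]
  rfl

theorem ofReal_sq_convolution_sub_le [MeasurableAdd G] [MeasurableNeg G] [μ.IsAddLeftInvariant]
    [μ.IsNegInvariant]
    (hg_nonneg : 0 ≤ g) (hg : ∫ t, g t ∂μ = 1) (hg2 : MemLp g 2 μ) (hf : MemLp f 2 μ) (x : G) :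
    ENNReal.ofReal (((g ⋆[ContinuousLinearMap.lsmul ℝ ℝ, μ] f) x - f x) ^ 2) ≤
      ∫⁻ t, ENNReal.ofReal (g t * (f (x - t) - f x) ^ 2) ∂μ := by
  have hfx : MemLp (fun t => f (x - t)) 2 μ :=
    hf.comp_measurePreserving (Measure.measurePreserving_sub_left μ x)
  rw [convolution_sub_self_eq_integral hg (hg2.integrable_mul hfx)]
  exact ofReal_sq_integral_mul_le_lintegral_mul_sq μ hg_nonneg hg
    (hfx.aestronglyMeasurable.sub aestronglyMeasurable_const)

end Convolution

section RescaledKernel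

variable {E : Type*} [NormedAddCommGroup E] [NormedSpace ℝ E] {ρ : E → ℝ} {η : ℝ}

noncomputable def rescaledKernel (η : ℝ) (ρ : E → ℝ) (x : E) : ℝ :=
  η ^ (-(finrank ℝ E : ℤ)) * ρ (η⁻¹ • x)

theorem rescaledKernel_nonneg (hη : 0 < η) (hρ : 0 ≤ ρ) : 0 ≤ rescaledKernel η ρ :=
  fun _ => mul_nonneg (zpow_pos hη _).le (hρ _)

theorem rescaledKernel_le (hη : 0 < η) (hρ : ∀ x, ρ x ≤ 1) (x : E) :
    rescaledKernel η ρ x ≤ η ^ (-(finrank ℝ E : ℤ)) :=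
  mul_le_of_le_one_right (zpow_pos hη _).le (hρ _)

theorem rescaledKernel_eq_zero (hη : 0 < η) (hρ : Function.support ρ ⊆ Metric.closedBall 0 1)
    {x : E} (hx : η < ‖x‖) : rescaledKernel η ρ x = 0 := by
  rw [rescaledKernel, Function.notMem_support.1 (fun h => ?_ : η⁻¹ • x ∉ Function.support ρ),
    mul_zero]
  have := hρ h
  rw [mem_closedBall_zero_iff, norm_smul, norm_inv, Real.norm_of_nonneg hη.le,
    inv_mul_le_iff₀ hη, mul_one] at this
  linarith

theorem integral_rescaledKernel [MeasurableSpace E] [BorelSpace E] [FiniteDimensional ℝ E]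
    (μ : Measure E) [μ.IsAddHaarMeasure] (hη : 0 < η) :
    ∫ x, rescaledKernel η ρ x ∂μ = ∫ x, ρ x ∂μ := by
  simp only [rescaledKernel]
  rw [integral_const_mul, Measure.integral_comp_inv_smul_of_nonneg μ ρ hη.le, smul_eq_mul,
    ← mul_assoc, zpow_neg, zpow_natCast, inv_mul_cancel₀ (pow_ne_zero _ hη.ne'), one_mul]

theorem rescaledKernel_le_rpow_mul_norm_rpow (hη : 0 < η) (hρ_le : ∀ x, ρ x ≤ 1)
    (hρ_supp : Function.support ρ ⊆ Metric.closedBall 0 1) {s : ℝ}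
    (hs : 0 ≤ (finrank ℝ E : ℝ) + s) {x : E} (hx : x ≠ 0) :
    rescaledKernel η ρ x ≤ η ^ s * ‖x‖ ^ (-((finrank ℝ E : ℝ) + s)) := by
  rcases le_or_gt ‖x‖ η with hxη | hxη
  · calc rescaledKernel η ρ x ≤ η ^ (-(finrank ℝ E : ℤ)) := rescaledKernel_le hη hρ_le x
      _ = η ^ s * η ^ (-((finrank ℝ E : ℝ) + s)) := by
        rw [← Real.rpow_add hη, ← Real.rpow_intCast]
        push_cast
        ring_nf
      _ ≤ η ^ s * ‖x‖ ^ (-((finrank ℝ E : ℝ) + s)) := by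
        refine mul_le_mul_of_nonneg_left ?_ (by positivity)
        exact Real.rpow_le_rpow_of_nonpos (norm_pos_iff.2 hx) hxη (neg_nonpos.2 hs)
  · rw [rescaledKernel_eq_zero hη hρ_supp hxη]
    positivity

theorem ofReal_rescaledKernel_mul_sq_le (hη : 0 < η) (hρ_le : ∀ x, ρ x ≤ 1)
    (hρ_supp : Function.support ρ ⊆ Metric.closedBall 0 1) {s : ℝ}
    (hs : 0 ≤ (finrank ℝ E : ℝ) + s) (f : E → ℝ) (x t : E) :
    ENNReal.ofReal (rescaledKernel η ρ t * (f (x - t) - f x) ^ 2) ≤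
      ENNReal.ofReal (η ^ s) *
        ENNReal.ofReal ((f (x - t) - f x) ^ 2 * ‖t‖ ^ (-((finrank ℝ E : ℝ) + s))) := by
  rcases eq_or_ne t 0 with rfl | ht
  · simp
  rw [← ENNReal.ofReal_mul (by positivity)]
  apply ENNReal.ofReal_le_ofReal
  calc rescaledKernel η ρ t * (f (x - t) - f x) ^ 2
      ≤ η ^ s * ‖t‖ ^ (-((finrank ℝ E : ℝ) + s)) * (f (x - t) - f x) ^ 2 := by
        gcongr
        exact rescaledKernel_le_rpow_mul_norm_rpow hη hρ_le hρ_supp hs ht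
    _ = η ^ s * ((f (x - t) - f x) ^ 2 * ‖t‖ ^ (-((finrank ℝ E : ℝ) + s))) := by ring

end RescaledKernel

theorem mollification_L2_rate_general
    (n : ℕ) (ρ : EuclideanSpace ℝ (Fin n) → ℝ)
    (hρ_nonneg : ∀ x, 0 ≤ ρ x) (hρ_le_one : ∀ x, ρ x ≤ 1)
    (hρ_supp : Function.support ρ ⊆ Metric.closedBall 0 1)
    (hρ_int : (∫ x, ρ x) = 1)
    (f : EuclideanSpace ℝ (Fin n) → ℝ)
    (hf : MemLp f 2 volume)
    (η : ℝ) (hη : 0 < η) (α : ℝ) (hα : 0 < α) :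
    (∫⁻ x, ENNReal.ofReal
        ((((fun x => η ^ (-(n : ℤ)) * ρ (η⁻¹ • x)) ⋆ f) x - f x) ^ 2)) ≤
      ENNReal.ofReal (η ^ (2 * α)) *
        ∫⁻ x, ∫⁻ y,
          ENNReal.ofReal ((f (x - y) - f x) ^ 2 * ‖y‖ ^ (-((n : ℝ) + 2 * α))) := by
  have hdim : finrank ℝ (EuclideanSpace ℝ (Fin n)) = n := finrank_euclideanSpace_fin
  have hg : (fun x => η ^ (-(n : ℤ)) * ρ (η⁻¹ • x)) = rescaledKernel η ρ := by
    ext x; rw [rescaledKernel, hdim]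
  rw [hg]
  have hg_int : ∫ x, rescaledKernel η ρ x = 1 := by rw [integral_rescaledKernel volume hη, hρ_int]
  have hg_nonneg := rescaledKernel_nonneg hη hρ_nonneg
  have hg2 : MemLp (rescaledKernel η ρ) 2 volume :=
    memLp_two_of_integrable_of_le (.of_integral_ne_zero (by simp [hg_int])) hg_nonneg
      (rescaledKernel_le hη hρ_le_one)
  have hkernel := ofReal_rescaledKernel_mul_sq_le hη hρ_le_one hρ_supp
    (s := 2 * α) (by positivity) f
  simp only [hdim] at hkernel
  calc (∫⁻ x, ENNReal.ofReal (((rescaledKernel η ρ ⋆ f) x - f x) ^ 2))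
      ≤ ∫⁻ x, ∫⁻ t, ENNReal.ofReal (rescaledKernel η ρ t * (f (x - t) - f x) ^ 2) :=
        lintegral_mono fun x => ofReal_sq_convolution_sub_le hg_nonneg hg_int hg2 hf x
    _ ≤ ∫⁻ x, ∫⁻ t, ENNReal.ofReal (η ^ (2 * α)) *
          ENNReal.ofReal ((f (x - t) - f x) ^ 2 * ‖t‖ ^ (-((n : ℝ) + 2 * α))) :=
        lintegral_mono fun x => lintegral_mono fun t => hkernel x t
    _ = _ := by simp_rw [lintegral_const_mul' _ _ ENNReal.ofReal_ne_top]

/-- Euclidean core of estimate (phasefield_Besov_final): the `L²`-distance between a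
function and its mollification at scale `η` is controlled by `η^{2α}` times its
squared Gagliardo-type seminorm of order `α` (the right-hand side may be infinite). -/
theorem mollification_L2_rate
    (n : ℕ) (hn : 1 ≤ n) (ρ : EuclideanSpace ℝ (Fin n) → ℝ)
    (hρ_meas : Measurable ρ)
    (hρ_nonneg : ∀ x, 0 ≤ ρ x) (hρ_le_one : ∀ x, ρ x ≤ 1)
    (hρ_supp : Function.support ρ ⊆ Metric.closedBall 0 1)
    (hρ_int : (∫ x, ρ x) = 1)
    (f : EuclideanSpace ℝ (Fin n) → ℝ) (hf_meas : Measurable f)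
    (hf : MemLp f 2 volume)
    (η : ℝ) (hη : 0 < η) (α : ℝ) (hα : 0 < α) (hα' : α < 1) :
    (∫⁻ x, ENNReal.ofReal
        ((((fun x => η ^ (-(n : ℤ)) * ρ (η⁻¹ • x)) ⋆ f) x - f x) ^ 2)) ≤
      ENNReal.ofReal (η ^ (2 * α)) *
        ∫⁻ x, ∫⁻ y,
          ENNReal.ofReal ((f (x - y) - f x) ^ 2 * ‖y‖ ^ (-((n : ℝ) + 2 * α))) :=
  mollification_L2_rate_general n ρ hρ_nonneg hρ_le_one hρ_supp hρ_int f hf η hη α hα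
end

section
/- Let n ≥ 1, ε > 0, and let f : ℝⁿ → ℝ be continuously differentiable. Then ∫_{ℝⁿ} ‖∇(H ∘ f)(x)‖ dx ≤ (1/2) · ∫_{ℝⁿ} ( ε⁻¹ · W(f(x)) + ε · ‖∇f(x)‖² ) dx, where both sides are interpreted as integrals with values in [0, ∞] with respect to Lebesgue measure. -/
open MeasureTheory

/-! The pointwise bound `‖∇(H ∘ f)‖ = H'(f) ‖∇f‖ ≤ √W(f) ‖∇f‖ ≤ ½ (ε⁻¹ W(f) + ε ‖∇f‖²)`
is the chain rule followed by the weighted AM–GM inequality; integrating it gives the estimate. -/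

lemma W_nonneg (s : ℝ) : 0 ≤ W s := sq_nonneg _

lemma continuous_W : Continuous W := by
  unfold W
  fun_prop

lemma hasDerivAt_H (s : ℝ) : HasDerivAt H (Real.sqrt (min (W s) (1 + s ^ 2))) s := by
  have hcont : Continuous fun r : ℝ => Real.sqrt (min (W r) (1 + r ^ 2)) :=
    (continuous_W.min (by fun_prop)).sqrt
  exact (hcont.integral_hasStrictDerivAt (-1) s).hasDerivAt

lemma norm_fderiv_H_comp_le {E : Type*} [NormedAddCommGroup E] [NormedSpace ℝ E]
    {f : E → ℝ} {x : E} (hf : DifferentiableAt ℝ f x) :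
    ‖fderiv ℝ (H ∘ f) x‖ ≤ Real.sqrt (W (f x)) * ‖fderiv ℝ f x‖ := by
  rw [((hasDerivAt_H (f x)).comp_hasFDerivAt x hf.hasFDerivAt).fderiv, norm_smul,
    Real.norm_of_nonneg (Real.sqrt_nonneg _)]
  gcongr
  exact min_le_left _ _

lemma two_mul_le_inv_mul_sq_add_mul_sq {ε : ℝ} (hε : 0 < ε) (u v : ℝ) :
    2 * (u * v) ≤ ε⁻¹ * u ^ 2 + ε * v ^ 2 := by
  have hsq : 0 ≤ ε⁻¹ * (u - ε * v) ^ 2 := by positivity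
  have hexpand : ε⁻¹ * (u - ε * v) ^ 2 = ε⁻¹ * u ^ 2 + ε * v ^ 2 - 2 * (u * v) := by
    field_simp
    ring
  linarith

lemma sqrt_mul_le_half_inv_mul_add_mul_sq {ε a : ℝ} (hε : 0 < ε) (ha : 0 ≤ a) (b : ℝ) :
    Real.sqrt a * b ≤ 1 / 2 * (ε⁻¹ * a + ε * b ^ 2) := by
  have h := two_mul_le_inv_mul_sq_add_mul_sq hε (Real.sqrt a) b
  rw [Real.sq_sqrt ha] at h
  linarith

theorem modica_mortola_integral_estimate_general
    (n : ℕ) (ε : ℝ) (hε : 0 < ε)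
    (f : EuclideanSpace ℝ (Fin n) → ℝ) (hf : ContDiff ℝ 1 f) :
    (∫⁻ x, ENNReal.ofReal ‖fderiv ℝ (H ∘ f) x‖) ≤
      ENNReal.ofReal (1 / 2) *
        ∫⁻ x, ENNReal.ofReal (ε⁻¹ * W (f x) + ε * ‖fderiv ℝ f x‖ ^ 2) := by
  have pointwise : ∀ x, ENNReal.ofReal ‖fderiv ℝ (H ∘ f) x‖ ≤
      ENNReal.ofReal (1 / 2) * ENNReal.ofReal (ε⁻¹ * W (f x) + ε * ‖fderiv ℝ f x‖ ^ 2) := by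
    intro x
    rw [← ENNReal.ofReal_mul (by norm_num)]
    exact ENNReal.ofReal_le_ofReal <|
      (norm_fderiv_H_comp_le (hf.differentiable one_ne_zero x)).trans
        (sqrt_mul_le_half_inv_mul_add_mul_sq hε (W_nonneg _) _)
  calc ∫⁻ x, ENNReal.ofReal ‖fderiv ℝ (H ∘ f) x‖
      ≤ ∫⁻ x, ENNReal.ofReal (1 / 2) *
          ENNReal.ofReal (ε⁻¹ * W (f x) + ε * ‖fderiv ℝ f x‖ ^ 2) := lintegral_mono pointwise
    _ = ENNReal.ofReal (1 / 2) *
          ∫⁻ x, ENNReal.ofReal (ε⁻¹ * W (f x) + ε * ‖fderiv ℝ f x‖ ^ 2) :=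
        lintegral_const_mul' _ _ ENNReal.ofReal_ne_top

/-- Euclidean version of the Modica–Mortola integral estimate (3.2): for any
`C¹` function `f : ℝⁿ → ℝ` and `ε > 0`,
`∫ ‖∇(H ∘ f)‖ ≤ (1/2) ∫ (ε⁻¹ W(f) + ε ‖∇f‖²)`, both sides taken in `[0, ∞]`. -/
theorem modica_mortola_integral_estimate
    (n : ℕ) (hn : 1 ≤ n) (ε : ℝ) (hε : 0 < ε)
    (f : EuclideanSpace ℝ (Fin n) → ℝ) (hf : ContDiff ℝ 1 f) :
    (∫⁻ x, ENNReal.ofReal ‖fderiv ℝ (H ∘ f) x‖) ≤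
      ENNReal.ofReal (1 / 2) *
        ∫⁻ x, ENNReal.ofReal (ε⁻¹ * W (f x) + ε * ‖fderiv ℝ f x‖ ^ 2) :=
  modica_mortola_integral_estimate_general n ε hε f hf
end
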